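/- arXiv:math/9911188 — 4 statements merged into one kernel-verified Lean document; each statement's English description precedes it below -/
import Mathlib

section
/- For every integer m ≥ 2 and every integer k ≥ 1, the set A_k is an open subset of Δ_m × 𝔖_m and has positive measure with respect to the product measure on Δ_m × 𝔖_m. -/
open Set MeasureTheory Filter

/-- `IsIETm b m E` : `E` is an interval exchange transformation of `[0,b)` with `m` intervals:
`E` maps `[0,b)` bijectively onto itself, there are points
`0 = a 1 < a 2 < ⋯ < a m < a (m+1) = b` such that on each `[a i, a (i+1))` the map `E` is the
translation `x ↦ E (a i) + x - a i`, and `E` (as a map of `[0,b)`) is discontinuous exactly at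
`a 2, …, a m`. -/
def IsIETm (b : ℝ) (m : ℕ) (E : ℝ → ℝ) : Prop :=
  0 < b ∧ 1 ≤ m ∧ Set.BijOn E (Set.Ico 0 b) (Set.Ico 0 b) ∧
  ∃ a : ℕ → ℝ,
    a 1 = 0 ∧ a (m + 1) = b ∧
    (∀ i, 1 ≤ i → i ≤ m → a i < a (i + 1)) ∧
    (∀ i, 1 ≤ i → i ≤ m → ∀ x ∈ Set.Ico (a i) (a (i + 1)), E x = E (a i) + x - a i) ∧
    (∀ x ∈ Set.Ico (0 : ℝ) b,
      (¬ ContinuousWithinAt E (Set.Ico 0 b) x ↔ ∃ i, 2 ≤ i ∧ i ≤ m ∧ x = a i))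

/-- `E` is an interval exchange transformation of `[0,b)` (with some number of intervals). -/
def IsIET (b : ℝ) (E : ℝ → ℝ) : Prop := ∃ m, IsIETm b m E

/-- The closed interval `[s,t] ⊆ [0,b)` is a virtual orthogonal edge for the
iet `E : [0,b) → [0,b)` : the restriction of `E` to `[s,t]` is continuous and
`s < E s < E (E s) = t`. -/
def VirtOrthEdge (b : ℝ) (E : ℝ → ℝ) (s t : ℝ) : Prop :=
  0 ≤ s ∧ t < b ∧ ContinuousOn E (Set.Icc s t) ∧
  s < E s ∧ E s < E (E s) ∧ E (E s) = t

/-- `E : [0,b) → [0,b)` has at least `N` pairwise disjoint virtual orthogonal edges. -/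
def HasDisjointEdges (b : ℝ) (E : ℝ → ℝ) (N : ℕ) : Prop :=
  ∃ s t : Fin N → ℝ,
    (∀ i, VirtOrthEdge b E (s i) (t i)) ∧
    (∀ i j, i ≠ j → Disjoint (Set.Icc (s i) (t i)) (Set.Icc (s j) (t j)))

/-- The first-return time of `x` to `[0,b)` under `E` : the least `j ≥ 1` with `E^[j] x ∈ [0,b)`. -/
noncomputable def returnTime (E : ℝ → ℝ) (b x : ℝ) : ℕ :=
  sInf {j : ℕ | 1 ≤ j ∧ E^[j] x ∈ Set.Ico 0 b}

/-- The first-return map (induced map) of `E` on `[0,b)`. -/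
noncomputable def inducedMap (E : ℝ → ℝ) (b : ℝ) (x : ℝ) : ℝ :=
  E^[returnTime E b x] x

/-- `E` belongs to `ℬ k` : there is a sequence `bₙ → 0` in `(0,1)` such that for every `n`
the induced iet of `E` on `[0, bₙ)` has at least `k` pairwise disjoint virtual
orthogonal edges. -/
def MemBk (k : ℕ) (E : ℝ → ℝ) : Prop :=
  ∃ bseq : ℕ → ℝ,
    (∀ n, bseq n ∈ Set.Ioo (0 : ℝ) 1) ∧
    Filter.Tendsto bseq Filter.atTop (nhds 0) ∧
    ∀ n, HasDisjointEdges (bseq n) (inducedMap E (bseq n)) k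

/-- `E` belongs to `ℬ = ⋂_{k ≥ 1} ℬ k`. -/
def MemB (E : ℝ → ℝ) : Prop := ∀ k, 1 ≤ k → MemBk k E

/-- The left endpoint `a i = ∑_{j < i} λ j` of the `i`-th interval. -/
noncomputable def leftEndpoint (m : ℕ) (lam : Fin m → ℝ) (i : Fin m) : ℝ :=
  ∑ j ∈ Finset.univ.filter (fun j => j < i), lam j

/-- The left endpoint `∑_{π j < π i} λ j` of the image of the `i`-th interval. -/
noncomputable def imageLeftEndpoint (m : ℕ) (lam : Fin m → ℝ) (π : Equiv.Perm (Fin m))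
    (i : Fin m) : ℝ :=
  ∑ j ∈ Finset.univ.filter (fun j => π j < π i), lam j

open Classical in
/-- The interval exchange transformation associated with the pair `(λ, π)` : on the `i`-th
interval `[a i, a i + λ i)` it is the translation taking `a i` to `∑_{π j < π i} λ j`. -/
noncomputable def ietOf (m : ℕ) (lam : Fin m → ℝ) (π : Equiv.Perm (Fin m)) (x : ℝ) : ℝ :=
  x + ∑ i : Fin m,
    (if leftEndpoint m lam i ≤ x ∧ x < leftEndpoint m lam i + lam i
      then imageLeftEndpoint m lam π i - leftEndpoint m lam i else 0)

/-- The open simplex `Δ_m` of positive probability vectors in `ℝ^m`. -/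
def posSimplex (m : ℕ) : Set (Fin m → ℝ) :=
  {lam | (∀ i, 0 < lam i) ∧ ∑ i, lam i = 1}

/-- The parametrization of (a superset of) `Δ_m` by its first `m - 1` coordinates; the last
coordinate is `1` minus the sum of the others.  It identifies the set
`{v ∈ ℝ^{m-1} | ∀ i, v i > 0, ∑ v i < 1}`, carrying `(m-1)`-dimensional Lebesgue measure,
with `Δ_m`. -/
def completeVec (m : ℕ) (v : Fin (m - 1) → ℝ) : Fin m → ℝ :=
  fun i => if h : (i : ℕ) < m - 1 then v ⟨i, h⟩ else 1 - ∑ j, v j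

/-- `E` belongs to `A_k` : for some `a ∈ (16⁻ᵏ - 32⁻ᵏ, 16⁻ᵏ + 32⁻ᵏ)`, `E x = a + x`
for all `x ∈ [0, 1/2]`. -/
def MemAk (k : ℕ) (E : ℝ → ℝ) : Prop :=
  ∃ a ∈ Set.Ioo ((16 : ℝ)⁻¹ ^ k - (32 : ℝ)⁻¹ ^ k) ((16 : ℝ)⁻¹ ^ k + (32 : ℝ)⁻¹ ^ k),
    ∀ x ∈ Set.Icc (0 : ℝ) (1 / 2), E x = a + x

instance (n : ℕ) : MeasurableSpace (Equiv.Perm (Fin n)) := ⊤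

instance (n : ℕ) : MeasurableSingletonClass (Equiv.Perm (Fin n)) :=
  ⟨fun _ => MeasurableSpace.measurableSet_top⟩

instance (n : ℕ) : TopologicalSpace (Equiv.Perm (Fin n)) := ⊥

instance (n : ℕ) : DiscreteTopology (Equiv.Perm (Fin n)) := ⟨rfl⟩

/-!
For `λ ∈ Δ_m`, the map `ietOf m λ π` translates the `n`-th interval `[c_n, c_{n+1})`, where
`c_n = λ_0 + ⋯ + λ_{n-1}`, by an amount `t_n` depending continuously on `λ`, and it is
discontinuous exactly at the cut points `c_{n+1}` with `t_n ≠ t_{n+1}`. As `IsIETm` asks for `m - 1`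
discontinuities, `(λ, π)` is an iet with `m` intervals iff `t_n ≠ t_{n+1}` for every `n`, and then
`x ↦ a + x` on `[0, 1/2]` forces the first interval to be longer than `1/2` and `a = t_0`. Hence
for each `π` the fibre of `A_k` is cut out by finitely many strict inequalities between continuous
functions of `λ`, so it is open. For the reversal `π = rev` and `λ_0 = 1 - 16⁻ᵏ` the first interval
moves by exactly `16⁻ᵏ`, so that fibre is non-empty and has positive Lebesgue measure.
-/

open Topology

variable {m : ℕ}

/-- Intervals are indexed by `ℕ` rather than `Fin m`, the `n`-th one being
`[cutPoint λ n, cutPoint λ (n + 1))`; indices `n ≥ m` give empty intervals. -/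
noncomputable def intervalLength (lam : Fin m → ℝ) (n : ℕ) : ℝ :=
  if h : n < m then lam ⟨n, h⟩ else 0

noncomputable def cutPoint (lam : Fin m → ℝ) (n : ℕ) : ℝ :=
  ∑ j ∈ Finset.range n, intervalLength lam j

noncomputable def translation (lam : Fin m → ℝ) (π : Equiv.Perm (Fin m)) (n : ℕ) : ℝ :=
  if h : n < m then imageLeftEndpoint m lam π ⟨n, h⟩ - leftEndpoint m lam ⟨n, h⟩ else 0

section CutPoint

variable {lam : Fin m → ℝ}

@[simp]
lemma intervalLength_coe (lam : Fin m → ℝ) (i : Fin m) : intervalLength lam i = lam i :=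
  dif_pos i.isLt

@[simp]
lemma cutPoint_zero (lam : Fin m → ℝ) : cutPoint lam 0 = 0 := rfl

lemma cutPoint_succ (lam : Fin m → ℝ) (n : ℕ) :
    cutPoint lam (n + 1) = cutPoint lam n + intervalLength lam n :=
  Finset.sum_range_succ _ _

lemma cutPoint_eq_sum_lt (lam : Fin m → ℝ) (n : ℕ) :
    cutPoint lam n = ∑ j ∈ Finset.univ.filter (fun j : Fin m => (j : ℕ) < n), lam j := by
  rw [Finset.sum_filter, Finset.sum_fin_eq_sum_range, cutPoint]
  apply Finset.sum_congr_of_eq_on_inter <;> grind [intervalLength]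

lemma cutPoint_top (hsum : ∑ i, lam i = 1) : cutPoint lam m = 1 := by
  rw [← hsum, Finset.sum_fin_eq_sum_range]
  rfl

lemma intervalLength_pos (hpos : ∀ i, 0 < lam i) {n : ℕ} (hn : n < m) :
    0 < intervalLength lam n :=
  intervalLength_coe lam ⟨n, hn⟩ ▸ hpos _

lemma intervalLength_nonneg (hpos : ∀ i, 0 < lam i) (n : ℕ) : 0 ≤ intervalLength lam n := by
  unfold intervalLength
  split_ifs
  exacts [(hpos _).le, le_rfl]

lemma cutPoint_lt_succ (hpos : ∀ i, 0 < lam i) {n : ℕ} (hn : n < m) :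
    cutPoint lam n < cutPoint lam (n + 1) := by
  simpa [cutPoint_succ] using intervalLength_pos hpos hn

lemma monotone_cutPoint (hpos : ∀ i, 0 < lam i) : Monotone (cutPoint lam) :=
  monotone_nat_of_le_succ fun n => by simpa [cutPoint_succ] using intervalLength_nonneg hpos n

lemma cutPoint_nonneg (hpos : ∀ i, 0 < lam i) (n : ℕ) : 0 ≤ cutPoint lam n :=
  cutPoint_zero lam ▸ monotone_cutPoint hpos n.zero_le

lemma cutPoint_le_one (hpos : ∀ i, 0 < lam i) (hsum : ∑ i, lam i = 1) {n : ℕ} (hn : n ≤ m) :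
    cutPoint lam n ≤ 1 :=
  cutPoint_top hsum ▸ monotone_cutPoint hpos hn

lemma Ico_cutPoint_subset (hpos : ∀ i, 0 < lam i) (hsum : ∑ i, lam i = 1) {n : ℕ}
    (hn : n < m) : Ico (cutPoint lam n) (cutPoint lam (n + 1)) ⊆ Ico 0 1 :=
  Ico_subset_Ico (cutPoint_nonneg hpos n) (cutPoint_le_one hpos hsum hn)

lemma exists_mem_Ico_succ_of_mem_Ico {α : Type*} [LinearOrder α] (f : ℕ → α) {x : α} {N : ℕ}
    (hx : x ∈ Ico (f 0) (f N)) : ∃ n < N, x ∈ Ico (f n) (f (n + 1)) := by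
  induction N with
  | zero => exact absurd hx.2 (not_lt.2 hx.1)
  | succ M ih =>
    by_cases h : x < f M
    · obtain ⟨n, hn, hxn⟩ := ih ⟨hx.1, h⟩
      exact ⟨n, hn.trans M.lt_succ_self, hxn⟩
    · exact ⟨M, M.lt_succ_self, not_lt.1 h, hx.2⟩

lemma exists_mem_Ico_cutPoint (hsum : ∑ i, lam i = 1) {x : ℝ} (hx : x ∈ Ico (0 : ℝ) 1) :
    ∃ n < m, x ∈ Ico (cutPoint lam n) (cutPoint lam (n + 1)) :=
  exists_mem_Ico_succ_of_mem_Ico _ (by rwa [cutPoint_zero, cutPoint_top hsum])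

lemma eq_of_mem_Ico_cutPoint (hpos : ∀ i, 0 < lam i) {n n' : ℕ} {x : ℝ}
    (hx : x ∈ Ico (cutPoint lam n) (cutPoint lam (n + 1)))
    (hx' : x ∈ Ico (cutPoint lam n') (cutPoint lam (n' + 1))) : n = n' := by
  by_contra hne
  exact (monotone_cutPoint hpos).pairwise_disjoint_on_Ico_succ hne
    |>.ne_of_mem hx hx' rfl

end CutPoint

section Pieces

variable {lam : Fin m → ℝ}

lemma leftEndpoint_eq_cutPoint (lam : Fin m → ℝ) (i : Fin m) :
    leftEndpoint m lam i = cutPoint lam i := by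
  simp only [leftEndpoint, cutPoint_eq_sum_lt, Fin.lt_def]

lemma imageLeftEndpoint_eq_cutPoint (lam : Fin m → ℝ) (π : Equiv.Perm (Fin m)) (i : Fin m) :
    imageLeftEndpoint m lam π i = cutPoint (lam ∘ π.symm) (π i) := by
  rw [cutPoint_eq_sum_lt]
  exact Finset.sum_equiv π (by simp) (by simp)

lemma translation_eq (lam : Fin m → ℝ) (π : Equiv.Perm (Fin m)) {n : ℕ} (hn : n < m) :
    translation lam π n = cutPoint (lam ∘ π.symm) (π ⟨n, hn⟩) - cutPoint lam n := by
  rw [translation, dif_pos hn, imageLeftEndpoint_eq_cutPoint, leftEndpoint_eq_cutPoint]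

lemma ietOf_eq_add_translation (hpos : ∀ i, 0 < lam i) (π : Equiv.Perm (Fin m)) {n : ℕ}
    (hn : n < m) {x : ℝ} (hx : x ∈ Ico (cutPoint lam n) (cutPoint lam (n + 1))) :
    ietOf m lam π x = x + translation lam π n := by
  rw [ietOf, Finset.sum_eq_single_of_mem (⟨n, hn⟩ : Fin m) (Finset.mem_univ _)]
  · rw [if_pos, translation, dif_pos hn]
    simpa [leftEndpoint_eq_cutPoint, cutPoint_succ, intervalLength, hn] using hx
  · intro j _ hj
    rw [if_neg]
    intro hxj
    refine hj (Fin.ext (eq_of_mem_Ico_cutPoint hpos ?_ hx))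
    simpa [leftEndpoint_eq_cutPoint, cutPoint_succ] using hxj

lemma ietOf_mem_Ico_cutPoint (hpos : ∀ i, 0 < lam i) (π : Equiv.Perm (Fin m)) {n : ℕ}
    (hn : n < m) {x : ℝ} (hx : x ∈ Ico (cutPoint lam n) (cutPoint lam (n + 1))) :
    ietOf m lam π x ∈ Ico (cutPoint (lam ∘ π.symm) (π ⟨n, hn⟩))
      (cutPoint (lam ∘ π.symm) (π ⟨n, hn⟩ + 1)) := by
  have hlen : intervalLength (lam ∘ π.symm) (π ⟨n, hn⟩) = intervalLength lam n := by
    simp [intervalLength, hn]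
  rw [ietOf_eq_add_translation hpos π hn hx, translation_eq lam π hn, cutPoint_succ, hlen]
  rw [cutPoint_succ] at hx
  constructor <;> linarith [hx.1, hx.2]

lemma mapsTo_ietOf (hpos : ∀ i, 0 < lam i) (hsum : ∑ i, lam i = 1) (π : Equiv.Perm (Fin m)) :
    MapsTo (ietOf m lam π) (Ico 0 1) (Ico 0 1) := by
  intro x hx
  obtain ⟨n, hn, hxn⟩ := exists_mem_Ico_cutPoint hsum hx
  exact Ico_cutPoint_subset (fun i => hpos _) ((Equiv.sum_comp π.symm lam).trans hsum)
    (π ⟨n, hn⟩).isLt (ietOf_mem_Ico_cutPoint hpos π hn hxn)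

/-- `ietOf (λ ∘ π⁻¹) π⁻¹` translates each interval back by the opposite amount. -/
lemma ietOf_symm_ietOf (hpos : ∀ i, 0 < lam i) (hsum : ∑ i, lam i = 1)
    (π : Equiv.Perm (Fin m)) {x : ℝ} (hx : x ∈ Ico (0 : ℝ) 1) :
    ietOf m (lam ∘ π.symm) π.symm (ietOf m lam π x) = x := by
  obtain ⟨n, hn, hxn⟩ := exists_mem_Ico_cutPoint hsum hx
  have hpos' : ∀ i, 0 < (lam ∘ π.symm) i := fun i => hpos _
  have hinv : translation (lam ∘ π.symm) π.symm (π ⟨n, hn⟩) = -translation lam π n := by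
    rw [translation_eq _ _ (π ⟨n, hn⟩).isLt, translation_eq lam π hn]
    simp [Function.comp_def]
  rw [ietOf_eq_add_translation hpos' π.symm (π ⟨n, hn⟩).isLt
    (ietOf_mem_Ico_cutPoint hpos π hn hxn), hinv, ietOf_eq_add_translation hpos π hn hxn]
  ring

lemma bijOn_ietOf (hpos : ∀ i, 0 < lam i) (hsum : ∑ i, lam i = 1) (π : Equiv.Perm (Fin m)) :
    BijOn (ietOf m lam π) (Ico 0 1) (Ico 0 1) := by
  have hpos' : ∀ i, 0 < (lam ∘ π.symm) i := fun i => hpos _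
  have hsum' : ∑ i, (lam ∘ π.symm) i = 1 := (Equiv.sum_comp π.symm lam).trans hsum
  have hback : (lam ∘ π.symm) ∘ π = lam := by ext; simp
  refine InvOn.bijOn ⟨fun x hx => ietOf_symm_ietOf hpos hsum π hx, fun y hy => ?_⟩
    (mapsTo_ietOf hpos hsum π) (mapsTo_ietOf hpos' hsum' π.symm)
  simpa only [Equiv.symm_symm, hback] using ietOf_symm_ietOf hpos' hsum' π.symm hy

end Pieces

section Continuity

variable {lam : Fin m → ℝ}

lemma continuousWithinAt_of_eqOn_add_const {E : ℝ → ℝ} {s U : Set ℝ} {x c : ℝ}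
    (hU : U ∈ 𝓝[s] x) (hx : x ∈ U) (hE : EqOn E (· + c) U) : ContinuousWithinAt E s x :=
  (continuous_add_const c).continuousWithinAt.congr_of_eventuallyEq
    (Filter.eventuallyEq_of_mem hU hE) (hE hx)

lemma continuousWithinAt_ietOf_of_mem_Ico (hpos : ∀ i, 0 < lam i) (π : Equiv.Perm (Fin m))
    {n : ℕ} (hn : n < m) {x : ℝ} (hx : x ∈ Ico (cutPoint lam n) (cutPoint lam (n + 1)))
    (hxn : n = 0 ∨ cutPoint lam n < x) :
    ContinuousWithinAt (ietOf m lam π) (Ico 0 1) x := by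
  refine continuousWithinAt_of_eqOn_add_const ?_ hx
    fun y hy => ietOf_eq_add_translation hpos π hn hy
  rcases hxn with rfl | hlt
  · exact mem_nhdsWithin.2 ⟨Iio (cutPoint lam 1), isOpen_Iio, hx.2,
      fun y hy => ⟨by simpa using hy.2.1, hy.1⟩⟩
  · exact mem_nhdsWithin_of_mem_nhds (Ico_mem_nhds hlt hx.2)

lemma continuousWithinAt_ietOf_cutPoint (hpos : ∀ i, 0 < lam i) (π : Equiv.Perm (Fin m))
    {n : ℕ} (hn : n + 1 < m) (ht : translation lam π n = translation lam π (n + 1)) :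
    ContinuousWithinAt (ietOf m lam π) (Ico 0 1) (cutPoint lam (n + 1)) := by
  have hlt : cutPoint lam n < cutPoint lam (n + 1) := cutPoint_lt_succ hpos (by omega)
  have hlt' := cutPoint_lt_succ hpos hn
  refine continuousWithinAt_of_eqOn_add_const (c := translation lam π n)
    (mem_nhdsWithin_of_mem_nhds (Ico_mem_nhds hlt hlt')) ⟨hlt.le, hlt'⟩ ?_
  intro y hy
  rcases lt_or_ge y (cutPoint lam (n + 1)) with h | h
  · exact ietOf_eq_add_translation hpos π (by omega) ⟨hy.1, h⟩
  · rw [ht]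
    exact ietOf_eq_add_translation hpos π hn ⟨h, hy.2⟩

/-- The one-sided limit from the left at `cutPoint λ (n + 1)` is computed on the `n`-th interval,
the value on the `(n + 1)`-st. -/
lemma not_continuousWithinAt_ietOf_cutPoint (hpos : ∀ i, 0 < lam i) (hsum : ∑ i, lam i = 1)
    (π : Equiv.Perm (Fin m)) {n : ℕ} (hn : n + 1 < m)
    (ht : translation lam π n ≠ translation lam π (n + 1)) :
    ¬ ContinuousWithinAt (ietOf m lam π) (Ico 0 1) (cutPoint lam (n + 1)) := by
  set x := cutPoint lam (n + 1)
  have hleft : Ico (cutPoint lam n) x ∈ 𝓝[<] x := Ico_mem_nhdsLT (cutPoint_lt_succ hpos (by omega))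
  have hle : 𝓝[<] x ≤ 𝓝[Ico 0 1] x :=
    nhdsWithin_le_of_mem (mem_of_superset hleft (Ico_cutPoint_subset hpos hsum (by omega)))
  intro hcont
  have hright : Tendsto (ietOf m lam π) (𝓝[<] x) (𝓝 (x + translation lam π (n + 1))) := by
    rw [← ietOf_eq_add_translation hpos π hn ⟨le_rfl, cutPoint_lt_succ hpos hn⟩]
    exact hcont.tendsto.mono_left hle
  have hleft_lim : Tendsto (ietOf m lam π) (𝓝[<] x) (𝓝 (x + translation lam π n)) :=
    (tendsto_nhdsWithin_of_tendsto_nhds ((continuous_add_const _).tendsto x)).congr'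
      (Filter.eventuallyEq_of_mem hleft fun y hy =>
        (ietOf_eq_add_translation hpos π (by omega) hy).symm)
  exact ht (add_left_cancel (tendsto_nhds_unique hleft_lim hright))

lemma not_continuousWithinAt_ietOf_iff (hpos : ∀ i, 0 < lam i) (hsum : ∑ i, lam i = 1)
    (π : Equiv.Perm (Fin m)) {x : ℝ} (hx : x ∈ Ico (0 : ℝ) 1) :
    ¬ ContinuousWithinAt (ietOf m lam π) (Ico 0 1) x ↔
      ∃ n, n + 1 < m ∧ x = cutPoint lam (n + 1) ∧
        translation lam π n ≠ translation lam π (n + 1) := by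
  constructor
  · intro hdisc
    by_contra! hcont
    obtain ⟨n, hn, hxn⟩ := exists_mem_Ico_cutPoint hsum hx
    rcases hxn.1.eq_or_lt with heq | hlt
    · cases n with
      | zero => exact hdisc (continuousWithinAt_ietOf_of_mem_Ico hpos π hn hxn (Or.inl rfl))
      | succ j =>
        subst heq
        exact hdisc (continuousWithinAt_ietOf_cutPoint hpos π hn (hcont j hn rfl))
    · exact hdisc (continuousWithinAt_ietOf_of_mem_Ico hpos π hn hxn (Or.inr hlt))
  · rintro ⟨n, hn, rfl, ht⟩
    exact not_continuousWithinAt_ietOf_cutPoint hpos hsum π hn ht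

end Continuity

/-- Adjacent intervals of `(λ, π)` are moved by different amounts, so that no cut point of `λ` is
removable. -/
def AdjacentTranslationsNe (lam : Fin m → ℝ) (π : Equiv.Perm (Fin m)) : Prop :=
  ∀ n, n + 1 < m → translation lam π n ≠ translation lam π (n + 1)

section IsIETm

variable {lam : Fin m → ℝ}

lemma isIETm_ietOf (hpos : ∀ i, 0 < lam i) (hsum : ∑ i, lam i = 1) (π : Equiv.Perm (Fin m))
    (hsep : AdjacentTranslationsNe lam π) : IsIETm 1 m (ietOf m lam π) := by
  have hm : 1 ≤ m := Nat.one_le_iff_ne_zero.2 (by rintro rfl; simp at hsum)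
  refine ⟨one_pos, hm, bijOn_ietOf hpos hsum π, fun i => cutPoint lam (i - 1), by simp,
    by simpa using cutPoint_top hsum, ?_, ?_, ?_⟩
  · intro i hi1 him
    simpa [Nat.sub_add_cancel hi1] using cutPoint_lt_succ hpos (n := i - 1) (by omega)
  · intro i hi1 him x hx
    have hx' : x ∈ Ico (cutPoint lam (i - 1)) (cutPoint lam (i - 1 + 1)) := by
      simpa [Nat.sub_add_cancel hi1] using hx
    rw [ietOf_eq_add_translation hpos π (by omega) hx',
      ietOf_eq_add_translation hpos π (by omega) ⟨le_rfl, hx'.1.trans_lt hx'.2⟩]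
    ring
  · intro x hx
    rw [not_continuousWithinAt_ietOf_iff hpos hsum π hx]
    constructor
    · rintro ⟨n, hn, rfl, -⟩
      exact ⟨n + 2, by omega, by omega, rfl⟩
    · rintro ⟨i, hi2, him, rfl⟩
      obtain ⟨n, rfl⟩ : ∃ n, i = n + 2 := ⟨i - 2, by omega⟩
      exact ⟨n, by omega, rfl, hsep n (by omega)⟩

/-- A removable cut point would leave fewer than the `m - 1` discontinuities that `IsIETm` asks
for, since every discontinuity of `ietOf λ π` is a non-removable cut point. -/
lemma adjacentTranslationsNe_of_isIETm (hpos : ∀ i, 0 < lam i) (hsum : ∑ i, lam i = 1)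
    (π : Equiv.Perm (Fin m)) (h : IsIETm 1 m (ietOf m lam π)) : AdjacentTranslationsNe lam π := by
  intro n₀ hn₀ heq
  obtain ⟨-, -, -, a, ha1, ham, hlt, -, hdisc⟩ := h
  have hmono : StrictMonoOn a (Icc 1 (m + 1)) :=
    strictMonoOn_of_lt_add_one ordConnected_Icc fun i _ hi hi' =>
      hlt i hi.1 (Nat.succ_le_succ_iff.1 hi'.2)
  have hsub : (Finset.Icc 2 m).image a ⊆
      ((Finset.range (m - 1)).erase n₀).image fun n => cutPoint lam (n + 1) := by
    intro y hy
    obtain ⟨i, hi, rfl⟩ := Finset.mem_image.1 hy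
    rw [Finset.mem_Icc] at hi
    have hai : a i ∈ Ico (0 : ℝ) 1 :=
      ⟨ha1 ▸ (hmono ⟨le_rfl, by omega⟩ ⟨by omega, by omega⟩ (by omega)).le,
        ham ▸ hmono ⟨by omega, by omega⟩ ⟨by omega, le_rfl⟩ (by omega)⟩
    obtain ⟨n, hn, hai_eq, hne⟩ :=
      (not_continuousWithinAt_ietOf_iff hpos hsum π hai).1 ((hdisc _ hai).2 ⟨i, hi.1, hi.2, rfl⟩)
    refine Finset.mem_image.2 ⟨n, Finset.mem_erase.2 ⟨?_, Finset.mem_range.2 (by omega)⟩,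
      hai_eq.symm⟩
    rintro rfl
    exact hne heq
  have hinj : InjOn a (Finset.Icc 2 m) :=
    hmono.injOn.mono fun i hi => by simp only [Finset.coe_Icc, mem_Icc] at hi ⊢; omega
  have hcard := (Finset.card_le_card hsub).trans Finset.card_image_le
  rw [Finset.card_image_of_injOn hinj, Nat.card_Icc,
    Finset.card_erase_of_mem (Finset.mem_range.2 (by omega)), Finset.card_range] at hcard
  omega

lemma isIETm_ietOf_iff (hpos : ∀ i, 0 < lam i) (hsum : ∑ i, lam i = 1)
    (π : Equiv.Perm (Fin m)) : IsIETm 1 m (ietOf m lam π) ↔ AdjacentTranslationsNe lam π :=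
  ⟨adjacentTranslationsNe_of_isIETm hpos hsum π, isIETm_ietOf hpos hsum π⟩

end IsIETm

lemma memAk_ietOf_iff {lam : Fin m → ℝ} (hpos : ∀ i, 0 < lam i) (π : Equiv.Perm (Fin m))
    (hm : 2 ≤ m) (hsep : AdjacentTranslationsNe lam π) (k : ℕ) :
    MemAk k (ietOf m lam π) ↔ 1 / 2 < intervalLength lam 0 ∧
      translation lam π 0 ∈ Ioo ((16 : ℝ)⁻¹ ^ k - (32 : ℝ)⁻¹ ^ k)
        ((16 : ℝ)⁻¹ ^ k + (32 : ℝ)⁻¹ ^ k) := by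
  have hcut1 : cutPoint lam 1 = intervalLength lam 0 := by simp [cutPoint_succ]
  have hfirst : ∀ x ∈ Ico 0 (cutPoint lam 1), ietOf m lam π x = x + translation lam π 0 :=
    fun x hx => ietOf_eq_add_translation hpos π (by omega) hx
  constructor
  · rintro ⟨a, ha, hEa⟩
    have hcut1_pos : 0 < cutPoint lam 1 := by
      simpa using cutPoint_lt_succ hpos (n := 0) (by omega)
    have ht0 : translation lam π 0 = a := by
      linarith [hfirst 0 ⟨le_rfl, hcut1_pos⟩, hEa 0 ⟨le_rfl, by norm_num⟩]
    refine ⟨not_le.1 fun hle => hsep 0 (by omega) ?_, ht0 ▸ ha⟩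
    -- the second interval starts at `cutPoint λ 1 ≤ 1 / 2`, where `ietOf λ π` is still `a + ·`
    have h1 := ietOf_eq_add_translation hpos π (n := 1) (by omega)
      ⟨le_rfl, cutPoint_lt_succ hpos (by omega)⟩
    have h2 := hEa (cutPoint lam 1) ⟨cutPoint_nonneg hpos 1, hcut1 ▸ hle⟩
    linarith
  · rintro ⟨hlen, ht⟩
    exact ⟨_, ht, fun x hx => (hfirst x ⟨hx.1, by linarith [hx.2]⟩).trans (add_comm _ _)⟩

def akFiber (k : ℕ) (π : Equiv.Perm (Fin m)) : Set (Fin m → ℝ) :=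
  {lam | (∀ i, 0 < lam i) ∧ 1 / 2 < intervalLength lam 0 ∧
    translation lam π 0 ∈ Ioo ((16 : ℝ)⁻¹ ^ k - (32 : ℝ)⁻¹ ^ k) ((16 : ℝ)⁻¹ ^ k + (32 : ℝ)⁻¹ ^ k) ∧
    AdjacentTranslationsNe lam π}

lemma mem_akFiber_iff (hm : 2 ≤ m) {lam : Fin m → ℝ} (hsum : ∑ i, lam i = 1) (k : ℕ)
    (π : Equiv.Perm (Fin m)) :
    lam ∈ akFiber k π ↔
      lam ∈ posSimplex m ∧ IsIETm 1 m (ietOf m lam π) ∧ MemAk k (ietOf m lam π) := by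
  constructor
  · rintro ⟨hpos, hlen, ht, hsep⟩
    exact ⟨⟨hpos, hsum⟩, (isIETm_ietOf_iff hpos hsum π).2 hsep,
      (memAk_ietOf_iff hpos π hm hsep k).2 ⟨hlen, ht⟩⟩
  · rintro ⟨⟨hpos, -⟩, hiet, hak⟩
    have hsep := (isIETm_ietOf_iff hpos hsum π).1 hiet
    obtain ⟨hlen, ht⟩ := (memAk_ietOf_iff hpos π hm hsep k).1 hak
    exact ⟨hpos, hlen, ht, hsep⟩

lemma continuous_intervalLength (n : ℕ) :
    Continuous fun lam : Fin m → ℝ => intervalLength lam n := by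
  unfold intervalLength
  split_ifs
  exacts [continuous_apply _, continuous_const]

lemma continuous_translation (π : Equiv.Perm (Fin m)) (n : ℕ) :
    Continuous fun lam : Fin m → ℝ => translation lam π n := by
  unfold translation imageLeftEndpoint leftEndpoint
  split_ifs
  exacts [by fun_prop, continuous_const]

lemma isOpen_akFiber (k : ℕ) (π : Equiv.Perm (Fin m)) : IsOpen (akFiber k π) := by
  have hsep : {lam : Fin m → ℝ | AdjacentTranslationsNe lam π} =
      ⋂ n ∈ Finset.range (m - 1), {lam | translation lam π n ≠ translation lam π (n + 1)} := by
    ext lam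
    simp [AdjacentTranslationsNe, Nat.lt_sub_iff_add_lt]
  simp only [akFiber, ofPred_and, ofPred_forall]
  refine (isOpen_iInter_of_finite fun i => isOpen_lt continuous_const (continuous_apply i)).inter
    ((isOpen_lt continuous_const (continuous_intervalLength 0)).inter
      ((isOpen_Ioo.preimage (continuous_translation π 0)).inter ?_))
  rw [hsep]
  exact isOpen_biInter_finset fun n _ =>
    isOpen_ne_fun (continuous_translation π n) (continuous_translation π (n + 1))

lemma continuous_completeVec (m : ℕ) : Continuous (completeVec m) := by
  refine continuous_pi fun i => ?_
  unfold completeVec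
  split_ifs
  exacts [continuous_apply _, by fun_prop]

lemma sum_completeVec (hm : 1 ≤ m) (v : Fin (m - 1) → ℝ) : ∑ i, completeVec m v i = 1 := by
  obtain ⟨M, rfl⟩ : ∃ M, m = M + 1 := ⟨m - 1, by omega⟩
  rw [Fin.sum_univ_castSucc]
  simp [completeVec]

lemma completeVec_comp_castLE {lam : Fin m → ℝ} (hsum : ∑ i, lam i = 1) :
    completeVec m (lam ∘ Fin.castLE (Nat.sub_le m 1)) = lam := by
  funext i
  by_cases h : (i : ℕ) < m - 1
  · simp [completeVec, h]
  · obtain ⟨M, rfl⟩ : ∃ M, m = M + 1 := ⟨m - 1, by omega⟩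
    obtain rfl : i = Fin.last M := Fin.ext (by simp at h ⊢; omega)
    rw [completeVec, dif_neg h, ← hsum, Fin.sum_univ_castSucc]
    exact add_sub_cancel_left _ _

lemma sum_lt_add_add_sum_gt (lam : Fin m → ℝ) (i : Fin m) :
    ∑ j ∈ Finset.univ.filter (· < i), lam j + lam i + ∑ j ∈ Finset.univ.filter (i < ·), lam j =
      ∑ j, lam j := by
  rw [Finset.sum_filter, Finset.sum_filter, ← Fintype.sum_ite_eq i lam,
    ← Finset.sum_add_distrib, ← Finset.sum_add_distrib]
  refine Finset.sum_congr rfl fun j _ => ?_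
  rcases lt_trichotomy j i with h | rfl | h <;> grind

lemma translation_revPerm {lam : Fin m → ℝ} (hsum : ∑ i, lam i = 1) {n : ℕ} (hn : n < m) :
    translation lam Fin.revPerm n = 1 - intervalLength lam n - 2 * cutPoint lam n := by
  have hsplit := sum_lt_add_add_sum_gt lam ⟨n, hn⟩
  have himage : imageLeftEndpoint m lam Fin.revPerm ⟨n, hn⟩ =
      ∑ j ∈ Finset.univ.filter (⟨n, hn⟩ < ·), lam j := by
    simp [imageLeftEndpoint, Fin.rev_lt_rev]
  rw [translation, dif_pos hn, himage, ← leftEndpoint_eq_cutPoint lam ⟨n, hn⟩, intervalLength,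
    dif_pos hn]
  rw [hsum] at hsplit
  unfold leftEndpoint
  linarith

lemma adjacentTranslationsNe_revPerm {lam : Fin m → ℝ} (hpos : ∀ i, 0 < lam i)
    (hsum : ∑ i, lam i = 1) : AdjacentTranslationsNe lam Fin.revPerm := by
  intro n hn
  rw [translation_revPerm hsum (by omega), translation_revPerm hsum hn, cutPoint_succ]
  linarith [intervalLength_pos hpos (n := n) (by omega), intervalLength_pos hpos hn]

/-- The witness: a long first interval of length `1 - 16⁻ᵏ`, the remaining length shared equally,
and the order of the intervals reversed, so that the first interval moves by exactly `16⁻ᵏ`. -/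
lemma exists_completeVec_mem_akFiber_revPerm {k : ℕ} (hm : 2 ≤ m) (hk : 1 ≤ k) :
    ∃ v : Fin (m - 1) → ℝ, completeVec m v ∈ akFiber k (Fin.revPerm : Equiv.Perm (Fin m)) := by
  obtain ⟨M, rfl⟩ : ∃ M, m = M + 2 := ⟨m - 2, by omega⟩
  set c : ℝ := (16 : ℝ)⁻¹ ^ k with hc_def
  have hc : 0 < c := by positivity
  have hc16 : c ≤ 16⁻¹ := pow_le_of_le_one (by norm_num) (by norm_num) (by omega)
  set lam : Fin (M + 2) → ℝ := Fin.cons (1 - c) fun _ => c / (M + 1)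
  have hpos : ∀ i, 0 < lam i :=
    Fin.cases (by simp [lam]; linarith) fun _ => by simp [lam]; positivity
  have hsum : ∑ i, lam i = 1 := by
    simp [lam, Fin.sum_cons]
    field_simp
    ring
  refine ⟨lam ∘ Fin.castLE (Nat.sub_le _ 1), ?_⟩
  rw [completeVec_comp_castLE hsum]
  have hlen : intervalLength lam 0 = 1 - c := rfl
  refine ⟨hpos, by rw [hlen]; linarith, ?_, adjacentTranslationsNe_revPerm hpos hsum⟩
  rw [translation_revPerm hsum (by omega), hlen, cutPoint_zero]
  constructor <;> linarith [show (0 : ℝ) < (32 : ℝ)⁻¹ ^ k by positivity]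

lemma setOf_mem_ak_eq_iUnion (hm : 2 ≤ m) (k : ℕ) :
    {p : (Fin (m - 1) → ℝ) × Equiv.Perm (Fin m) |
        completeVec m p.1 ∈ posSimplex m ∧
        IsIETm 1 m (ietOf m (completeVec m p.1) p.2) ∧
        MemAk k (ietOf m (completeVec m p.1) p.2)} =
      ⋃ π, (completeVec m ⁻¹' akFiber k π) ×ˢ {π} := by
  ext ⟨v, π⟩
  simp only [mem_ofPred_eq, mem_iUnion, mem_prod, mem_preimage, mem_singleton_iff,
    exists_eq_right']
  exact (mem_akFiber_iff hm (sum_completeVec (by omega) v) k π).symm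

/-- For every `m ≥ 2` and `k ≥ 1`, the set `A_k ⊆ Δ_m × 𝔖_m` is open and has
positive measure, for the product of the (subspace) topology and `(m-1)`-dimensional Lebesgue
measure on `Δ_m` (via the parametrization of `Δ_m` by its first `m - 1` coordinates) with the
discrete topology and counting measure on `𝔖_m`. -/
theorem Ak_isOpen_and_pos_measure (m k : ℕ) (hm : 2 ≤ m) (hk : 1 ≤ k) :
    IsOpen {p : (Fin (m - 1) → ℝ) × Equiv.Perm (Fin m) |
        completeVec m p.1 ∈ posSimplex m ∧
        IsIETm 1 m (ietOf m (completeVec m p.1) p.2) ∧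
        MemAk k (ietOf m (completeVec m p.1) p.2)} ∧
    0 < (Measure.prod (volume : Measure (Fin (m - 1) → ℝ))
        (Measure.count : Measure (Equiv.Perm (Fin m))))
      {p : (Fin (m - 1) → ℝ) × Equiv.Perm (Fin m) |
        completeVec m p.1 ∈ posSimplex m ∧
        IsIETm 1 m (ietOf m (completeVec m p.1) p.2) ∧
        MemAk k (ietOf m (completeVec m p.1) p.2)} := by
  rw [setOf_mem_ak_eq_iUnion hm k]
  set U : Equiv.Perm (Fin m) → Set (Fin (m - 1) → ℝ) := fun π => completeVec m ⁻¹' akFiber k π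
  have hU : ∀ π, IsOpen (U π) := fun π => (isOpen_akFiber k π).preimage (continuous_completeVec m)
  refine ⟨isOpen_iUnion fun π => (hU π).prod (isOpen_discrete _), ?_⟩
  obtain ⟨v, hv⟩ := exists_completeVec_mem_akFiber_revPerm (k := k) hm hk
  calc 0 < volume (U Fin.revPerm) := (hU _).measure_pos volume ⟨v, hv⟩
    _ = (volume.prod Measure.count) (U Fin.revPerm ×ˢ {Fin.revPerm}) := by
      rw [Measure.prod_prod, Measure.count_singleton, mul_one]
    _ ≤ _ := measure_mono (subset_iUnion (fun π => U π ×ˢ {π}) Fin.revPerm)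
end

section
/- Let E : [0,1) → [0,1) be an interval exchange transformation, let a > 0 be a real number, and let j ≥ 1 be an integer with 4ja < 1. If E(x) = a + x for all x ∈ [0, 1/2], then E has at least j pairwise disjoint virtual orthogonal edges, all contained in [0, 1/2]. -/
open Set MeasureTheory Filter

/-- If `E : [0,1) → [0,1)` is an interval exchange transformation, `a > 0`,
`j ≥ 1` and `4 j a < 1`, and `E x = a + x` for all `x ∈ [0, 1/2]`, then `E` has at least `j`
pairwise disjoint virtual orthogonal edges, all contained in `[0, 1/2]`. -/
theorem disjoint_edges_of_translation_on_half (E : ℝ → ℝ) (hE : IsIET 1 E)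
    (a : ℝ) (ha : 0 < a) (j : ℕ) (hj : 1 ≤ j) (hja : 4 * (j : ℝ) * a < 1)
    (hEa : ∀ x ∈ Set.Icc (0 : ℝ) (1 / 2), E x = a + x) :
    ∃ s t : Fin j → ℝ,
      (∀ i, VirtOrthEdge 1 E (s i) (t i)) ∧
      (∀ i, Set.Icc (s i) (t i) ⊆ Set.Icc (0 : ℝ) (1 / 2)) ∧
      (∀ i i', i ≠ i' → Disjoint (Set.Icc (s i) (t i)) (Set.Icc (s i') (t i'))) := by
  have hj' : (0:ℝ) < j := by exact_mod_cast hj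
  set δ : ℝ := (1/2 - 2*(j:ℝ)*a)/j with hδdef
  have hδ : 0 < δ := by
    apply div_pos _ hj'
    nlinarith
  set s : Fin j → ℝ := fun i => (i:ℝ) * (2*a + δ) with hs
  set t : Fin j → ℝ := fun i => s i + 2*a with ht
  have hibound : ∀ i : Fin j, (i:ℝ) ≤ (j:ℝ) - 1 := by
    intro i
    have : (i:ℕ) + 1 ≤ j := i.2
    have : ((i:ℕ):ℝ) + 1 ≤ (j:ℝ) := by exact_mod_cast this
    linarith
  have hsnn : ∀ i : Fin j, 0 ≤ s i := by
    intro i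
    have : (0:ℝ) ≤ (i:ℝ) := by positivity
    have h2 : 0 ≤ 2*a + δ := by linarith
    exact mul_nonneg this h2
  have hthalf : ∀ i : Fin j, t i ≤ 1/2 - δ := by
    intro i
    have h1 : s i ≤ ((j:ℝ) - 1) * (2*a + δ) :=
      mul_le_mul_of_nonneg_right (hibound i) (by linarith)
    have hjδ : (j:ℝ) * δ = 1/2 - 2*(j:ℝ)*a := by
      rw [hδdef]; field_simp
    simp only [ht]
    nlinarith
  clear hδdef
  clear_value δ s t
  have hmem : ∀ i : Fin j, Set.Icc (s i) (t i) ⊆ Set.Icc (0:ℝ) (1/2) := by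
    intro i x hx
    exact ⟨le_trans (hsnn i) hx.1, le_trans hx.2 (by linarith [hthalf i])⟩
  refine ⟨s, t, ?_, hmem, ?_⟩
  · intro i
    have hsmem : s i ∈ Set.Icc (0:ℝ) (1/2) := hmem i ⟨le_refl _, by simp only [ht]; linarith⟩
    have hEs : E (s i) = a + s i := hEa _ hsmem
    have hEsmem : a + s i ∈ Set.Icc (0:ℝ) (1/2) := by
      constructor
      · linarith [hsnn i, ha.le]
      · have := hthalf i
        simp only [ht] at this
        linarith
    have hEEs : E (E (s i)) = 2*a + s i := by
      rw [hEs, hEa _ hEsmem]; ring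
    refine ⟨hsnn i, ?_, ?_, ?_, ?_, ?_⟩
    · have := hthalf i
      linarith
    · apply ContinuousOn.congr (f := fun x => a + x)
      · exact (continuous_const.add continuous_id).continuousOn
      · intro x hx
        exact hEa x (hmem i hx)
    · rw [hEs]; linarith
    · rw [hEEs, hEs]; linarith
    · rw [hEEs]; simp only [ht]; ring
  · have key : ∀ i i' : Fin j, i < i' → t i < s i' := by
      intro i i' h
      have h1 : (i:ℝ) + 1 ≤ (i':ℝ) := by
        have : (i:ℕ) + 1 ≤ (i':ℕ) := h
        exact_mod_cast this
      have h2 : ((i:ℝ) + 1) * (2*a + δ) ≤ (i':ℝ) * (2*a + δ) :=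
        mul_le_mul_of_nonneg_right h1 (by linarith)
      simp only [ht, hs]
      nlinarith
    have hdis : ∀ i i' : Fin j, i < i' →
        Disjoint (Set.Icc (s i) (t i)) (Set.Icc (s i') (t i')) := by
      intro i i' h
      rw [Set.disjoint_left]
      intro x hx hx'
      have := key i i' h
      have h1 := hx.2
      have h2 := hx'.1
      linarith
    intro i i' hne
    rcases hne.lt_or_gt with h | h
    · exact hdis i i' h
    · exact (hdis i' i h).symm
end

section
/- Let k ≥ 1 and m ≥ 2 be integers and let E : [0,1) → [0,1) be an interval exchange transformation with m intervals belonging to A_k. Then E has more than k pairwise disjoint virtual orthogonal edges. -/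
open Set MeasureTheory Filter

/-!
On `[0, 1/2]` a map in `A_k` is the translation `x ↦ x + a` by some `a ≈ 16⁻ᵏ`. For a
translation by `a > 0`, every interval `[s, s + 2a]` is a virtual orthogonal edge, and the
intervals `[3ai, 3ai + 2a]`, `i = 0, …, k`, are pairwise disjoint; they fit inside `[0, 1/2]`
because `(3k + 2) a ≤ 1/2`, which reduces to Bernoulli's inequality `9k + 6 ≤ 16ᵏ`.
-/

open Function

lemma virtOrthEdge_of_eqOn_add {b a s : ℝ} {E : ℝ → ℝ} (hs : 0 ≤ s) (hb : s + 2 * a < b)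
    (ha : 0 < a) (hE : EqOn E (a + ·) (Icc s (s + 2 * a))) :
    VirtOrthEdge b E s (s + 2 * a) := by
  have hEs : E s = a + s := hE ⟨le_rfl, by linarith⟩
  have hEEs : E (a + s) = a + (a + s) := hE ⟨by linarith, by linarith⟩
  refine ⟨hs, hb, (continuous_const.add continuous_id).continuousOn.congr hE, ?_, ?_, ?_⟩
  · linarith
  · rw [hEs, hEEs]; linarith
  · rw [hEs, hEEs]; ring

lemma pairwise_disjoint_Icc_mul_add {d w : ℝ} (hd : 0 ≤ d) (hw : w < d) :
    Pairwise (Disjoint on fun i : ℕ => Icc (d * i) (d * i + w)) := by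
  refine (pairwise_disjoint_on _).2 fun i j hij => Set.disjoint_left.2 fun x hxi hxj => ?_
  have hij' : (i : ℝ) + 1 ≤ j := by exact_mod_cast hij
  nlinarith [hxi.2, hxj.1]

lemma hasDisjointEdges_of_eqOn_add {a b c : ℝ} {E : ℝ → ℝ} (N : ℕ) (ha : 0 < a)
    (hc : (3 * N - 1) * a ≤ c) (hcb : c < b) (hE : EqOn E (a + ·) (Icc 0 c)) :
    HasDisjointEdges b E N := by
  refine ⟨fun i => 3 * a * i, fun i => 3 * a * i + 2 * a, fun i => ?_, fun i j hij => ?_⟩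
  · have hi : (i : ℝ) + 1 ≤ N := by exact_mod_cast i.isLt
    have hs : 0 ≤ 3 * a * i := by positivity
    have hsc : 3 * a * i + 2 * a ≤ c := by nlinarith
    exact virtOrthEdge_of_eqOn_add hs (by linarith) ha (hE.mono (Icc_subset_Icc hs hsc))
  · exact pairwise_disjoint_Icc_mul_add (by positivity) (by linarith) (Fin.val_injective.ne hij)

lemma three_mul_add_two_mul_le_half {k : ℕ} (hk : 1 ≤ k) {a : ℝ}
    (ha : a < (16 : ℝ)⁻¹ ^ k + (32 : ℝ)⁻¹ ^ k) : (3 * k + 2) * a ≤ 1 / 2 := by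
  have hk' : (1 : ℝ) ≤ k := by exact_mod_cast hk
  have h32 : (32 : ℝ)⁻¹ ^ k ≤ 1 / 2 * (16 : ℝ)⁻¹ ^ k := by
    rw [show (32 : ℝ)⁻¹ = 2⁻¹ * 16⁻¹ by norm_num, mul_pow]
    gcongr
    simpa using pow_le_pow_of_le_one (by norm_num : (0 : ℝ) ≤ 2⁻¹) (by norm_num) hk
  have bernoulli : 1 + k * (15 : ℝ) ≤ 16 ^ k := by
    have := one_add_mul_le_pow (by norm_num : (-2 : ℝ) ≤ 15) k
    norm_num at this
    exact this
  calc (3 * k + 2) * a ≤ (3 * k + 2) * (3 / 2 * (16 : ℝ)⁻¹ ^ k) := by gcongr; linarith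
    _ = (9 * k + 6) / 2 * (16 : ℝ)⁻¹ ^ k := by ring
    _ ≤ 16 ^ k / 2 * (16 : ℝ)⁻¹ ^ k := by gcongr; linarith
    _ = 1 / 2 := by rw [inv_pow]; field_simp

theorem edges_of_mem_Ak_general (k : ℕ) (hk : 1 ≤ k)
    (E : ℝ → ℝ) (hA : MemAk k E) :
    HasDisjointEdges 1 E (k + 1) := by
  obtain ⟨a, ⟨ha_gt, ha_lt⟩, hE⟩ := hA
  have ha : 0 < a := by
    have h32_le_16 : (32 : ℝ)⁻¹ ^ k ≤ (16 : ℝ)⁻¹ ^ k :=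
      pow_le_pow_left₀ (by norm_num) (by norm_num) k
    linarith
  refine hasDisjointEdges_of_eqOn_add (k + 1) ha ?_ (by norm_num : (1 / 2 : ℝ) < 1) hE
  push_cast
  linarith [three_mul_add_two_mul_le_half hk ha_lt]

/-- If `k ≥ 1`, `m ≥ 2` and `E : [0,1) → [0,1)` is an interval exchange
transformation with `m` intervals belonging to `A_k`, then `E` has more than `k` pairwise
disjoint virtual orthogonal edges. -/
theorem edges_of_mem_Ak (k m : ℕ) (hk : 1 ≤ k) (hm : 2 ≤ m)
    (E : ℝ → ℝ) (hE : IsIETm 1 m E) (hA : MemAk k E) :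
    HasDisjointEdges 1 E (k + 1) :=
  edges_of_mem_Ak_general k hk E hA
end

section
/- Let E : [0,1) → [0,1) be an interval exchange transformation. Suppose there is a sequence b_n → 0 of points of (0,1) such that for every integer k ≥ 1 there are infinitely many n for which the rescaled induced iet Ẽ_n : [0,1) → [0,1), Ẽ_n(z) = (1/b_n) · E_{b_n}(b_n·z), satisfies: there exists a ∈ (16^{−k} − 32^{−k}, 16^{−k} + 32^{−k}) with Ẽ_n(z) = a + z for all z ∈ [0, 1/2]. Then E belongs to ℬ. -/
open Set MeasureTheory Filter

lemma hasEdges_of_translation (k : ℕ) (hk : 1 ≤ k) (b : ℝ) (hb : 0 < b) (a : ℝ)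
    (ha : a ∈ Set.Ioo ((16 : ℝ)⁻¹ ^ k - (32 : ℝ)⁻¹ ^ k) ((16 : ℝ)⁻¹ ^ k + (32 : ℝ)⁻¹ ^ k))
    (F : ℝ → ℝ) (hF : ∀ x ∈ Set.Icc (0 : ℝ) (b / 2), F x = a * b + x) :
    HasDisjointEdges b F k := by
  have hk1 : (1 : ℝ) ≤ k := by exact_mod_cast hk
  have h3216 : (32 : ℝ)⁻¹ ^ k < (16 : ℝ)⁻¹ ^ k :=
    pow_lt_pow_left₀ (by norm_num) (by norm_num) (by omega)
  have ha0 : 0 < a := lt_of_le_of_lt (by linarith) ha.1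
  have h16 : (0 : ℝ) < 16 ^ k := by positivity
  have ha2 : a < 2 * ((16 : ℝ) ^ k)⁻¹ := by
    have := ha.2
    rw [← inv_pow]
    linarith
  have hB : (1 : ℝ) + k * 15 ≤ 16 ^ k := by
    have := one_add_mul_le_pow (show (-2 : ℝ) ≤ 15 by norm_num) k
    norm_num at this
    linarith
  have h1 : a * 16 ^ k < 2 := by
    have := mul_lt_mul_of_pos_right ha2 h16
    rwa [mul_assoc, inv_mul_cancel₀ (ne_of_gt h16), mul_one] at this
  have key : (3 * (k : ℝ) - 1) * a ≤ 1 / 2 := by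
    have h2 : ((3 * (k : ℝ) - 1) * a) * 16 ^ k < (3 * (k : ℝ) - 1) * 2 := by
      have h3 : (0 : ℝ) < 3 * (k : ℝ) - 1 := by linarith
      calc ((3 * (k : ℝ) - 1) * a) * 16 ^ k = (3 * (k : ℝ) - 1) * (a * 16 ^ k) := by ring
        _ < (3 * (k : ℝ) - 1) * 2 := by exact mul_lt_mul_of_pos_left h1 h3
    have h4 : (3 * (k : ℝ) - 1) * 2 ≤ (1 / 2) * 16 ^ k := by nlinarith
    have h5 : ((3 * (k : ℝ) - 1) * a) * 16 ^ k ≤ (1 / 2) * 16 ^ k := le_of_lt (h2.trans_le h4)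
    exact le_of_mul_le_mul_right h5 h16
  set c := a * b with hc
  have hc0 : 0 < c := mul_pos ha0 hb
  -- bound for each index
  have hbnd : ∀ i : Fin k, (3 * (i : ℝ) + 2) * c ≤ b / 2 := by
    intro i
    have hik : (i : ℝ) + 1 ≤ (k : ℝ) := by exact_mod_cast i.2
    have h6 : (3 * (i : ℝ) + 2) * a ≤ (3 * (k : ℝ) - 1) * a := by
      apply mul_le_mul_of_nonneg_right _ (le_of_lt ha0)
      linarith
    have h7 : (3 * (i : ℝ) + 2) * a ≤ 1 / 2 := h6.trans key
    calc (3 * (i : ℝ) + 2) * c = ((3 * (i : ℝ) + 2) * a) * b := by rw [hc]; ring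
      _ ≤ (1 / 2) * b := mul_le_mul_of_nonneg_right h7 (le_of_lt hb)
      _ = b / 2 := by ring
  refine ⟨fun i => 3 * (i : ℝ) * c, fun i => (3 * (i : ℝ) + 2) * c, fun i => ?_, ?_⟩
  · show VirtOrthEdge b F (3 * (i : ℝ) * c) ((3 * (i : ℝ) + 2) * c)
    have hi0 : (0 : ℝ) ≤ (i : ℝ) := Nat.cast_nonneg _
    have hs0 : 0 ≤ 3 * (i : ℝ) * c := by positivity
    have hti := hbnd i
    have hmem1 : 3 * (i : ℝ) * c ∈ Set.Icc (0 : ℝ) (b / 2) := ⟨hs0, by nlinarith⟩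
    have hmem2 : c + 3 * (i : ℝ) * c ∈ Set.Icc (0 : ℝ) (b / 2) := ⟨by positivity, by nlinarith⟩
    have hFs : F (3 * (i : ℝ) * c) = c + 3 * (i : ℝ) * c := hF _ hmem1
    have hFFs : F (F (3 * (i : ℝ) * c)) = c + (c + 3 * (i : ℝ) * c) := by
      rw [hFs]; exact hF _ hmem2
    refine ⟨hs0, by linarith, ?_, by rw [hFs]; linarith, by rw [hFFs, hFs]; linarith,
      by rw [hFFs]; ring⟩
    · exact ((continuous_const.add continuous_id).continuousOn).congr
        (fun x hx => hF x ⟨le_trans hs0 hx.1, le_trans hx.2 hti⟩)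
  · intro i j hij
    show Disjoint (Set.Icc (3 * (i : ℝ) * c) ((3 * (i : ℝ) + 2) * c))
      (Set.Icc (3 * (j : ℝ) * c) ((3 * (j : ℝ) + 2) * c))
    have hd : ∀ x y u v : ℝ, y < u → Disjoint (Set.Icc x y) (Set.Icc u v) := by
      intro x y u v h
      refine Set.disjoint_left.2 fun z hz hz' => ?_
      exact absurd (lt_of_le_of_lt hz.2 (lt_of_lt_of_le h hz'.1)) (lt_irrefl z)
    rcases lt_or_gt_of_ne hij with h | h
    · apply hd
      have : (i : ℝ) + 1 ≤ (j : ℝ) := by exact_mod_cast Fin.lt_iff_val_lt_val.mp h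
      nlinarith
    · apply (hd _ _ _ _ ?_).symm
      have : (j : ℝ) + 1 ≤ (i : ℝ) := by exact_mod_cast Fin.lt_iff_val_lt_val.mp h
      nlinarith

/-- Let `E : [0,1) → [0,1)` be an interval exchange transformation and let
`bₙ → 0` be a sequence in `(0,1)` such that for every `k ≥ 1` there are infinitely many `n`
for which the rescaled induced iet `z ↦ (1/bₙ) * E_{bₙ} (bₙ * z)` coincides on `[0, 1/2]` with
a translation `z ↦ a + z` for some `a ∈ (16⁻ᵏ - 32⁻ᵏ, 16⁻ᵏ + 32⁻ᵏ)`.  Then `E ∈ ℬ`. -/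
theorem memB_of_frequently_translation (E : ℝ → ℝ) (hE : IsIET 1 E)
    (bseq : ℕ → ℝ) (hbmem : ∀ n, bseq n ∈ Set.Ioo (0 : ℝ) 1)
    (hblim : Filter.Tendsto bseq Filter.atTop (nhds 0))
    (hfreq : ∀ k : ℕ, 1 ≤ k → ∃ᶠ n in Filter.atTop,
      ∃ a ∈ Set.Ioo ((16 : ℝ)⁻¹ ^ k - (32 : ℝ)⁻¹ ^ k) ((16 : ℝ)⁻¹ ^ k + (32 : ℝ)⁻¹ ^ k),
        ∀ z ∈ Set.Icc (0 : ℝ) (1 / 2),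
          (1 / bseq n) * inducedMap E (bseq n) (bseq n * z) = a + z) :
    MemB E := by
  intro k hk
  obtain ⟨φ, hφ, hp⟩ := Filter.extraction_of_frequently_atTop (hfreq k hk)
  refine ⟨bseq ∘ φ, fun n => hbmem _, hblim.comp hφ.tendsto_atTop, fun n => ?_⟩
  obtain ⟨a, ha, hfa⟩ := hp n
  simp only [Function.comp_apply]
  have hb : 0 < bseq (φ n) := (hbmem (φ n)).1
  apply hasEdges_of_translation k hk _ hb a ha
  intro x hx
  have hz : x / bseq (φ n) ∈ Set.Icc (0 : ℝ) (1 / 2) := by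
    constructor
    · exact div_nonneg hx.1 (le_of_lt hb)
    · rw [div_le_div_iff₀ hb (by norm_num : (0:ℝ) < 2)] at *
      · nlinarith [hx.2]
  have h := hfa (x / bseq (φ n)) hz
  rw [mul_div_cancel₀ x (ne_of_gt hb)] at h
  have h2 := congrArg (fun y => bseq (φ n) * y) h
  field_simp at h2
  linarith [h2]
end
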